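/- arXiv:2310.17807 — 2 statements merged into one kernel-verified Lean document; each statement's English description precedes it below -/
import Mathlib

section
/- Acceptance bound for consistent inputs (Theorem 1, part 1). Let A and B be countable types, B equipped with an equivalence relation ≡, let G ⊆ A × B, let D be a probability mass function on A × B with D(G) > 0, let M : A → PMF(B) be a transfer model, and let f : A → e(B) assign to each x ∈ A an equivalence class of B. Let D_G denote D conditioned on the event {(x, y) : (x, y) ∈ G}. Define the single-edge acceptance probability on consistent inputs as Acc := E_{(x,y) ~ D_G}[ M(x)( { y' : y' ≡ y } ) ]. Suppose: (Consistency alignment) the probability under D_G that y ∈ f(x) is at least c₁; and (Concentration) for some 0 < l ≤ 1 and p_c ∈ [0, 1], the probability, under D conditioned on the event {(x, y) ∈ G and y ∈ f(x)}, that M(x)(f(x)) ≥ l is at least p_c. Then Acc ≥ l · p_c · c₁. -/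
open scoped Classical ENNReal

/-!
Conditioning on `G`, then on `y ∈ f x`, then on `l ≤ M(x)(f x)`, the probability of the last
event is at least `p_c · c₁`, because conditional probabilities multiply along a chain of
events. On that event `[y] = f x`, so the acceptance probability `M(x)([y])` is at least `l`
there, and the acceptance probability on `D_G` is at least `l` times its conditional mass.
-/

/-- The chain rule for conditional probabilities, as an inequality of ratios in `ℝ≥0∞`. -/
theorem ENNReal.mul_le_div_of_le_div_of_le_div {p q a b c : ℝ≥0∞}
    (hp : p ≤ a / b) (hq : q ≤ b / c) : p * q ≤ a / c := by
  -- `b / c = 0` when `b = 0` and `a / b = 0` when `b = ∞`, so the ratios only cancel otherwise.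
  rcases eq_or_ne b 0 with rfl | hb0
  · simp [nonpos_iff_eq_zero.mp (ENNReal.zero_div ▸ hq)]
  rcases eq_or_ne b ⊤ with rfl | hbtop
  · simp [nonpos_iff_eq_zero.mp (ENNReal.div_top ▸ hp)]
  calc p * q ≤ a / b * (b / c) := by gcongr
    _ = a / c := by rw [← mul_div_assoc, ENNReal.div_mul_cancel hb0 hbtop]

theorem ENNReal.mul_tsum_ite_le_tsum_ite_mul {α : Type*} {E F : α → Prop}
    [DecidablePred E] [DecidablePred F] (f g : α → ℝ≥0∞) (l : ℝ≥0∞)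
    (h : ∀ a, E a → F a ∧ l ≤ g a) :
    l * ∑' a, (if E a then f a else 0) ≤ ∑' a, if F a then f a * g a else 0 := by
  rw [← ENNReal.tsum_mul_left]
  refine ENNReal.tsum_le_tsum fun a => ?_
  by_cases hE : E a
  · rw [if_pos hE, if_pos (h a hE).1, mul_comm]
    exact mul_le_mul_right (h a hE).2 _
  · simp [hE]

theorem tsum_subtype_quotient_mk_eq {B M : Type*} [AddCommMonoid M] [TopologicalSpace M]
    (sb : Setoid B) (g : B → M) (y : B) :
    ∑' y' : {y' : B // Quotient.mk sb y' = Quotient.mk sb y}, g y' =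
      ∑' y' : {y' : B // sb.r y' y}, g y' :=
  (Equiv.subtypeEquivRight fun _ => Quotient.eq).tsum_eq fun y' : {y' : B // sb.r y' y} => g y'

theorem clover_accept_consistent_general
    {A B : Type*}
    (sb : Setoid B)
    (G : A → B → Prop)
    (D : PMF (A × B))
    (M : A → PMF B)
    (f : A → Quotient sb)
    (c₁ l pc : ℝ≥0∞)
    -- Consistency alignment: Pr_{D_G}[ y ∈ f(x) ] ≥ c₁
    (halign :
      c₁ ≤ (∑' p : A × B, if G p.1 p.2 ∧ Quotient.mk sb p.2 = f p.1 then D p else 0) /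
        (∑' p : A × B, if G p.1 p.2 then D p else 0))
    -- Concentration: conditioned on (x,y) ∈ G and y ∈ f(x),
    -- with probability ≥ p_c the mass M(x)(f(x)) is at least l
    (hconc :
      pc ≤ (∑' p : A × B,
          if (G p.1 p.2 ∧ Quotient.mk sb p.2 = f p.1) ∧
              l ≤ ∑' y : {y : B // Quotient.mk sb y = f p.1}, M p.1 y.1
          then D p else 0) /
        (∑' p : A × B, if G p.1 p.2 ∧ Quotient.mk sb p.2 = f p.1 then D p else 0)) :
    -- Acc = E_{(x,y) ~ D_G}[ M(x)({y' : y' ≡ y}) ] ≥ l · p_c · c₁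
    l * pc * c₁ ≤
      (∑' p : A × B,
          if G p.1 p.2 then D p * ∑' y' : {y' : B // sb.r y' p.2}, M p.1 y'.1 else 0) /
        (∑' p : A × B, if G p.1 p.2 then D p else 0) := by
  calc l * pc * c₁ = l * (pc * c₁) := mul_assoc _ _ _
    _ ≤ l * (_ / _) := mul_le_mul_right (ENNReal.mul_le_div_of_le_div_of_le_div hconc halign) l
    _ = _ / _ := (mul_div_assoc _ _ _).symm
    _ ≤ _ := by
        gcongr
        refine ENNReal.mul_tsum_ite_le_tsum_ite_mul _ _ l fun p ⟨⟨hG, hf⟩, hl⟩ => ⟨hG, ?_⟩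
        rwa [← hf, tsum_subtype_quotient_mk_eq sb (fun y => M p.1 y)] at hl

/-- Theorem 1, part 1: acceptance bound for consistent inputs.
The single-edge Clover consistency check accepts a consistent input `(x, y) ∈ G`,
drawn from `D` conditioned on `G`, with probability at least `l · p_c · c₁`. -/
theorem clover_accept_consistent
    {A B : Type*} [Countable A] [Countable B]
    (sb : Setoid B)
    (G : A → B → Prop)
    (D : PMF (A × B))
    (M : A → PMF B)
    (f : A → Quotient sb)
    (c₁ l pc : ℝ≥0∞)
    (hl0 : 0 < l) (hl1 : l ≤ 1) (hpc : pc ≤ 1)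
    -- D(G) > 0
    (hDG : 0 < ∑' p : A × B, if G p.1 p.2 then D p else 0)
    -- Consistency alignment: Pr_{D_G}[ y ∈ f(x) ] ≥ c₁
    (halign :
      c₁ ≤ (∑' p : A × B, if G p.1 p.2 ∧ Quotient.mk sb p.2 = f p.1 then D p else 0) /
        (∑' p : A × B, if G p.1 p.2 then D p else 0))
    -- Concentration: conditioned on (x,y) ∈ G and y ∈ f(x),
    -- with probability ≥ p_c the mass M(x)(f(x)) is at least l
    (hconc :
      pc ≤ (∑' p : A × B,
          if (G p.1 p.2 ∧ Quotient.mk sb p.2 = f p.1) ∧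
              l ≤ ∑' y : {y : B // Quotient.mk sb y = f p.1}, M p.1 y.1
          then D p else 0) /
        (∑' p : A × B, if G p.1 p.2 ∧ Quotient.mk sb p.2 = f p.1 then D p else 0)) :
    -- Acc = E_{(x,y) ~ D_G}[ M(x)({y' : y' ≡ y}) ] ≥ l · p_c · c₁
    l * pc * c₁ ≤
      (∑' p : A × B,
          if G p.1 p.2 then D p * ∑' y' : {y' : B // sb.r y' p.2}, M p.1 y'.1 else 0) /
        (∑' p : A × B, if G p.1 p.2 then D p else 0) :=
  clover_accept_consistent_general sb G D M f c₁ l pc halign hconc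
end

section
/- Acceptance bound for inconsistent inputs (Theorem 1, part 2). Let A and B be countable types, B equipped with an equivalence relation ≡, let G ⊆ A × B, let D be a probability mass function on A × B with D(complement of G) > 0, let M : A → PMF(B) be a transfer model, and let f : A → e(B) assign to each x ∈ A an equivalence class of B. Let D_{¬G} denote D conditioned on the event {(x, y) : (x, y) ∉ G}. Define the single-edge acceptance probability on inconsistent inputs as Acc := E_{(x,y) ~ D_{¬G}}[ M(x)( { y' : y' ≡ y } ) ]. Suppose: (Consistency alignment) the probability under D_{¬G} that y ∈ f(x) is at most c₀; and (Concentration) for some u ≥ 0 and p_c ∈ [0, 1], the probability, under D conditioned on the event {(x, y) ∉ G and y ∉ f(x)}, that every equivalence class C of B with C ≠ f(x) satisfies M(x)(C) ≤ u, is at least p_c. Then Acc ≤ u · p_c · (1 − c₀) + (1 − p_c) · (1 − c₀) + c₀. -/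
open scoped Classical ENNReal

/-!
Split the inconsistent inputs into those with `y ∈ f x`, where the check accepts with
probability at most `1`, those with `y ∉ f x` on which `M x` concentrates, where it accepts
with probability at most `u` (or `1`, whichever is smaller), and the rest, again at most `1`.
With weights `a₁ + a₂ + a₃ = 1` the acceptance probability is then at most
`a₁ + u a₂ + a₃ = 1 - (1 - u) a₂`, and `a₂ ≥ p_c (1 - a₁) ≥ p_c (1 - c₀)` by concentration and
alignment, which gives `1 - (1 - u) p_c (1 - c₀)`, the claimed bound.
-/

namespace PMF

variable {B : Type*} {s : Setoid B}

theorem tsum_subtype_mk_eq_map_apply (μ : PMF B) (C : Quotient s) :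
    ∑' y : {y : B // Quotient.mk s y = C}, μ y.1 = μ.map (Quotient.mk s) C := by
  refine (tsum_subtype {y | Quotient.mk s y = C} μ).trans ?_
  rw [map_apply]
  congr! 2 with y
  simp [Set.indicator_apply, eq_comm]

theorem tsum_subtype_rel_eq_map_apply (μ : PMF B) (y : B) :
    ∑' y' : {y' : B // s.r y' y}, μ y'.1 = μ.map (Quotient.mk s) (Quotient.mk s y) := by
  rw [← tsum_subtype_mk_eq_map_apply]
  exact (Equiv.subtypeEquivRight fun _ => Quotient.eq.symm).tsum_eq (fun y' => μ y'.1)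

end PMF

section Mass

variable {α : Type*}

/-- `mass D (fun a => Q a ∧ P a) / mass D Q` is the probability of `P` under `D` conditioned
on `Q`. -/
noncomputable def mass (D : α → ℝ≥0∞) (P : α → Prop) [DecidablePred P] : ℝ≥0∞ :=
  ∑' a, if P a then D a else 0

theorem PMF.mass_ne_top (D : PMF α) (P : α → Prop) [DecidablePred P] : mass D P ≠ ∞ :=
  ne_top_of_le_ne_top D.tsum_coe_ne_top <|
    ENNReal.tsum_le_tsum fun a => by split_ifs <;> simp

theorem mass_and_add_mass_and_not (D : α → ℝ≥0∞) (P Q : α → Prop) [DecidablePred P]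
    [DecidablePred Q] :
    mass D (fun a => P a ∧ Q a) + mass D (fun a => P a ∧ ¬ Q a) = mass D P := by
  rw [mass, mass, mass, ← ENNReal.tsum_add]
  refine tsum_congr fun a => ?_
  by_cases hP : P a <;> by_cases hQ : Q a <;> simp [hP, hQ]

theorem tsum_ite_mul_le_mass {D g : α → ℝ≥0∞} {P Q R : α → Prop} [DecidablePred P]
    [DecidablePred Q] [DecidablePred R] {u : ℝ≥0∞}
    (hg : ∀ a, g a ≤ 1) (hgu : ∀ a, P a → ¬ Q a → R a → g a ≤ u) :
    ∑' a, (if P a then D a * g a else 0) ≤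
      mass D (fun a => P a ∧ Q a) + min u 1 * mass D (fun a => (P a ∧ ¬ Q a) ∧ R a) +
        mass D (fun a => (P a ∧ ¬ Q a) ∧ ¬ R a) := by
  rw [mass, mass, mass, ← ENNReal.tsum_mul_left, ← ENNReal.tsum_add, ← ENNReal.tsum_add]
  refine ENNReal.tsum_le_tsum fun a => ?_
  by_cases hP : P a
  · by_cases hQ : Q a
    · simpa [hP, hQ] using mul_le_of_le_one_right' (hg a)
    · by_cases hR : R a
      · simpa [hP, hQ, hR, mul_comm] using
          mul_le_mul_right (le_min (hgu a hP hQ hR) (hg a)) (D a)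
      · simpa [hP, hQ, hR] using mul_le_of_le_one_right' (hg a)
  · simp [hP]

end Mass

namespace ENNReal

theorem mul_add_le_of_mul_le_of_add_eq {x y s p q : ℝ≥0∞} (hs : s ≠ ∞) (hxy : x + y = s)
    (hp : p * s ≤ x) (hq : q ≤ 1) : q * x + y ≤ (q * p + (1 - p)) * s := by
  obtain ⟨d, rfl⟩ : ∃ d, x = p * s + d := ⟨x - p * s, (add_tsub_cancel_of_le hp).symm⟩
  have hps : p * s ≠ ∞ := ne_top_of_le_ne_top hs (le_self_add.trans (le_self_add.trans_eq hxy))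
  have hdy : d + y = (1 - p) * s := by
    rw [ENNReal.sub_mul fun _ _ => hs, one_mul]
    exact ENNReal.eq_sub_of_add_eq hps ((by ring : d + y + p * s = p * s + d + y).trans hxy)
  calc q * (p * s + d) + y = q * p * s + (q * d + y) := by ring
    _ ≤ q * p * s + (d + y) := by gcongr; exact mul_le_of_le_one_left' hq
    _ = (q * p + (1 - p)) * s := by rw [hdy]; ring

end ENNReal

theorem add_mul_add_le_of_alignment_of_concentration {a₁ a₂ a₃ W Z c₀ u pc : ℝ≥0∞}
    (hZ : Z ≠ ∞) (hsplit : a₁ + W = Z) (hW : a₂ + a₃ = W) (halign : a₁ ≤ c₀ * Z)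
    (hconc : pc * W ≤ a₂) (hu : u ≤ 1) (hpc : pc ≤ 1) (hc₀ : c₀ ≤ 1) :
    a₁ + u * a₂ + a₃ ≤ (u * pc * (1 - c₀) + (1 - pc) * (1 - c₀) + c₀) * Z := by
  have hW_ne_top : W ≠ ∞ := ne_top_of_le_ne_top hZ (hsplit ▸ le_add_self)
  have hq : u * pc + (1 - pc) ≤ 1 := by
    calc u * pc + (1 - pc) ≤ 1 * pc + (1 - pc) := by gcongr
      _ = 1 := by rw [one_mul, add_tsub_cancel_of_le hpc]
  have hW_ge : (1 - c₀) * Z ≤ W := by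
    rw [ENNReal.sub_mul fun _ _ => hZ, one_mul, tsub_le_iff_right]
    calc Z = W + a₁ := by rw [← hsplit, add_comm]
      _ ≤ W + c₀ * Z := by gcongr
  have h := ENNReal.mul_add_le_of_mul_le_of_add_eq hZ ((add_comm _ _).trans hsplit) hW_ge hq
  rw [ENNReal.sub_sub_cancel ENNReal.one_ne_top hc₀] at h
  calc a₁ + u * a₂ + a₃ = (u * a₂ + a₃) + a₁ := by ring
    _ ≤ (u * pc + (1 - pc)) * W + a₁ := by
      gcongr; exact ENNReal.mul_add_le_of_mul_le_of_add_eq hW_ne_top hW hconc hu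
    _ ≤ _ := h
    _ = _ := by ring

theorem div_le_of_alignment_of_concentration {N a₁ a₂ a₃ W Z c₀ u pc : ℝ≥0∞}
    (hZ₀ : Z ≠ 0) (hZ : Z ≠ ∞) (hsplit : a₁ + W = Z) (hW : a₂ + a₃ = W)
    (hN : N ≤ a₁ + min u 1 * a₂ + a₃) (halign : a₁ / Z ≤ c₀) (hconc : pc ≤ a₂ / W)
    (hpc : pc ≤ 1) :
    N / Z ≤ u * pc * (1 - c₀) + (1 - pc) * (1 - c₀) + c₀ := by
  rw [ENNReal.div_le_iff hZ₀ hZ] at halign ⊢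
  have hconc' : pc * W ≤ a₂ := by
    rcases eq_or_ne W 0 with hW₀ | hW₀
    · simp [hW₀]
    · have hW_ne_top : W ≠ ∞ := ne_top_of_le_ne_top hZ (hsplit ▸ le_add_self)
      exact (ENNReal.le_div_iff_mul_le (Or.inl hW₀) (Or.inl hW_ne_top)).1 hconc
  rcases le_or_gt c₀ 1 with hc₀ | hc₀
  · calc N ≤ a₁ + min u 1 * a₂ + a₃ := hN
      _ ≤ (min u 1 * pc * (1 - c₀) + (1 - pc) * (1 - c₀) + c₀) * Z :=
        add_mul_add_le_of_alignment_of_concentration hZ hsplit hW halign hconc'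
          (min_le_right _ _) hpc hc₀
      _ ≤ _ := by gcongr; exact min_le_left _ _
  · calc N ≤ a₁ + 1 * a₂ + a₃ := hN.trans (by gcongr; exact min_le_right _ _)
      _ = 1 * Z := by rw [← hsplit, ← hW]; ring
      _ ≤ _ := by gcongr; exact hc₀.le.trans le_add_self

theorem clover_accept_inconsistent_general
    {A B : Type*}
    (sb : Setoid B)
    (G : A → B → Prop)
    (D : PMF (A × B))
    (M : A → PMF B)
    (f : A → Quotient sb)
    (c₀ u pc : ℝ≥0∞)
    (hpc : pc ≤ 1)
    -- D(complement of G) > 0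
    (hDnG : 0 < ∑' p : A × B, if ¬ G p.1 p.2 then D p else 0)
    -- Consistency alignment: Pr_{D_{¬G}}[ y ∈ f(x) ] ≤ c₀
    (halign :
      (∑' p : A × B, if ¬ G p.1 p.2 ∧ Quotient.mk sb p.2 = f p.1 then D p else 0) /
        (∑' p : A × B, if ¬ G p.1 p.2 then D p else 0) ≤ c₀)
    -- Concentration: conditioned on (x,y) ∉ G and y ∉ f(x),
    -- with probability ≥ p_c every class C ≠ f(x) has mass M(x)(C) ≤ u
    (hconc :
      pc ≤ (∑' p : A × B,
          if (¬ G p.1 p.2 ∧ Quotient.mk sb p.2 ≠ f p.1) ∧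
              (∀ C : Quotient sb, C ≠ f p.1 →
                (∑' y : {y : B // Quotient.mk sb y = C}, M p.1 y.1) ≤ u)
          then D p else 0) /
        (∑' p : A × B, if ¬ G p.1 p.2 ∧ Quotient.mk sb p.2 ≠ f p.1 then D p else 0)) :
    -- Acc = E_{(x,y) ~ D_{¬G}}[ M(x)({y' : y' ≡ y}) ]
    --     ≤ u · p_c · (1 − c₀) + (1 − p_c) · (1 − c₀) + c₀
    (∑' p : A × B,
        if ¬ G p.1 p.2 then D p * ∑' y' : {y' : B // sb.r y' p.2}, M p.1 y'.1 else 0) /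
      (∑' p : A × B, if ¬ G p.1 p.2 then D p else 0) ≤
      u * pc * (1 - c₀) + (1 - pc) * (1 - c₀) + c₀ := by
  have hsplit := mass_and_add_mass_and_not D (fun p => ¬ G p.1 p.2)
    (fun p => Quotient.mk sb p.2 = f p.1)
  have hW := mass_and_add_mass_and_not D (fun p => ¬ G p.1 p.2 ∧ Quotient.mk sb p.2 ≠ f p.1)
    (fun p => ∀ C : Quotient sb, C ≠ f p.1 →
      (∑' y : {y : B // Quotient.mk sb y = C}, M p.1 y.1) ≤ u)
  refine div_le_of_alignment_of_concentration hDnG.ne' (D.mass_ne_top fun p => ¬ G p.1 p.2)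
    hsplit hW ?_ halign hconc hpc
  simp only [PMF.tsum_subtype_rel_eq_map_apply]
  exact tsum_ite_mul_le_mass (fun p => PMF.coe_le_one _ _) fun p _ hne hbound =>
    (PMF.tsum_subtype_mk_eq_map_apply _ _).symm.trans_le (hbound _ hne)

/-- Theorem 1, part 2: acceptance bound for inconsistent inputs.
The single-edge Clover consistency check accepts an inconsistent input `(x, y) ∉ G`,
drawn from `D` conditioned on the complement of `G`, with probability at most
`u · p_c · (1 − c₀) + (1 − p_c) · (1 − c₀) + c₀`. -/
theorem clover_accept_inconsistent
    {A B : Type*} [Countable A] [Countable B]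
    (sb : Setoid B)
    (G : A → B → Prop)
    (D : PMF (A × B))
    (M : A → PMF B)
    (f : A → Quotient sb)
    (c₀ u pc : ℝ≥0∞)
    (hu : 0 ≤ u) (hpc : pc ≤ 1)
    -- D(complement of G) > 0
    (hDnG : 0 < ∑' p : A × B, if ¬ G p.1 p.2 then D p else 0)
    -- Consistency alignment: Pr_{D_{¬G}}[ y ∈ f(x) ] ≤ c₀
    (halign :
      (∑' p : A × B, if ¬ G p.1 p.2 ∧ Quotient.mk sb p.2 = f p.1 then D p else 0) /
        (∑' p : A × B, if ¬ G p.1 p.2 then D p else 0) ≤ c₀)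
    -- Concentration: conditioned on (x,y) ∉ G and y ∉ f(x),
    -- with probability ≥ p_c every class C ≠ f(x) has mass M(x)(C) ≤ u
    (hconc :
      pc ≤ (∑' p : A × B,
          if (¬ G p.1 p.2 ∧ Quotient.mk sb p.2 ≠ f p.1) ∧
              (∀ C : Quotient sb, C ≠ f p.1 →
                (∑' y : {y : B // Quotient.mk sb y = C}, M p.1 y.1) ≤ u)
          then D p else 0) /
        (∑' p : A × B, if ¬ G p.1 p.2 ∧ Quotient.mk sb p.2 ≠ f p.1 then D p else 0)) :
    -- Acc = E_{(x,y) ~ D_{¬G}}[ M(x)({y' : y' ≡ y}) ]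
    --     ≤ u · p_c · (1 − c₀) + (1 − p_c) · (1 − c₀) + c₀
    (∑' p : A × B,
        if ¬ G p.1 p.2 then D p * ∑' y' : {y' : B // sb.r y' p.2}, M p.1 y'.1 else 0) /
      (∑' p : A × B, if ¬ G p.1 p.2 then D p else 0) ≤
      u * pc * (1 - c₀) + (1 - pc) * (1 - c₀) + c₀ :=
  clover_accept_inconsistent_general sb G D M f c₀ u pc hpc hDnG halign hconc
end
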